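/- arXiv:1606.00705 — 5 statements merged into one kernel-verified Lean document; each statement's English description precedes it below -/
import Mathlib

section
/- Let Ω be a compact convex set, f⁺ an absolutely continuous measure on Ω, P the (a.e. well-defined) projection onto ∂Ω, and R(x) = 2P(x) − x. With u the signed distance to ∂Ω, one has ∫ u d(f⁺ − R#f⁺) = ∫ |x − R(x)| df⁺(x); consequently the plan (id, R)#f⁺ is an optimal transport plan between f⁺ and R#f⁺ for the cost |x−y|. -/
open MeasureTheory Metric Set Classical

/-!
Write `r = dist x (P x)`. The ball of radius `r` about `x` lies in `Ω`, so if some point `z` of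
`Ω` were closer than `r` to `R x = 2 P x - x`, then `2 P x - z` would be an interior point of `Ω`
and, by convexity, so would the midpoint `P x` of it and `z`. Hence `R x` lies outside `Ω` at
distance exactly `r` from `∂Ω`, and the signed distance `u` drops by `2 r = |x - R x|` from `x`
to `R x`. Since `u` is `1`-Lipschitz, `∫ u d(f⁺ - R#f⁺)` bounds the cost of every coupling from
below, and `(id, R)#f⁺` attains it.
-/

theorem IsPreconnected.inter_frontier_nonempty {X : Type*} [TopologicalSpace X] {s t : Set X}
    (ht : IsPreconnected t) (hts : (t ∩ s).Nonempty) (hts' : (t \ s).Nonempty) :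
    (t ∩ frontier s).Nonempty := by
  by_contra h
  have hcover : t ⊆ interior s ∪ (closure s)ᶜ := fun x hx => by
    by_contra hx'
    simp only [mem_union, mem_compl_iff, not_or, not_not] at hx'
    exact h ⟨x, hx, hx'.2, hx'.1⟩
  have hdisj : Disjoint (interior s) (closure s)ᶜ :=
    disjoint_compl_right.mono_left interior_subset_closure
  obtain ⟨x, hxt, hxs⟩ := hts
  have hx : x ∈ interior s := (hcover hxt).resolve_right (not_not.2 (subset_closure hxs))
  obtain ⟨y, hyt, hys⟩ := hts'
  exact hys (interior_subset <| ht.subset_left_of_subset_union isOpen_interior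
    isClosed_closure.isOpen_compl hdisj hcover ⟨x, hxt, hx⟩ hyt)

section SignedDistance

variable {E : Type*} [NormedAddCommGroup E] [NormedSpace ℝ E]

theorem infDist_frontier_add_infDist_frontier_le {s : Set E} {x y : E} (hx : x ∈ s)
    (hy : y ∉ s) : infDist x (frontier s) + infDist y (frontier s) ≤ dist x y := by
  obtain ⟨z, hz, hzs⟩ := (convex_segment x y).isPreconnected.inter_frontier_nonempty
    ⟨x, left_mem_segment ℝ x y, hx⟩ ⟨y, right_mem_segment ℝ x y, hy⟩
  rw [← dist_add_dist_of_mem_segment hz, dist_comm z y]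
  exact add_le_add (infDist_le_dist_of_mem hzs) (infDist_le_dist_of_mem hzs)

theorem ball_infDist_frontier_subset {s : Set E} {x : E} (hx : x ∈ s) :
    ball x (infDist x (frontier s)) ⊆ s := fun y hy => by
  by_contra hys
  have := infDist_frontier_add_infDist_frontier_le hx hys
  rw [mem_ball'] at hy
  linarith [infDist_nonneg (x := y) (s := frontier s)]

noncomputable def signedInfDist (s : Set E) (x : E) : ℝ :=
  if x ∈ s then infDist x (frontier s) else -infDist x (frontier s)

theorem lipschitzWith_signedInfDist (s : Set E) : LipschitzWith 1 (signedInfDist s) := by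
  refine LipschitzWith.of_le_add fun x y => ?_
  have hx0 : 0 ≤ infDist x (frontier s) := infDist_nonneg
  have hy0 : 0 ≤ infDist y (frontier s) := infDist_nonneg
  unfold signedInfDist
  split_ifs with hx hy hy
  · linarith [infDist_le_infDist_add_dist (x := x) (y := y) (s := frontier s)]
  · linarith [infDist_frontier_add_infDist_frontier_le hx hy]
  · linarith [dist_nonneg (x := x) (y := y)]
  · linarith [infDist_le_infDist_add_dist (x := y) (y := x) (s := frontier s), dist_comm x y]

variable {s : Set E} {x p : E}

theorem Convex.dist_le_dist_reflection (hs : Convex ℝ s) (hx : x ∈ s) (hp : p ∈ frontier s)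
    (hxp : dist x p = infDist x (frontier s)) {z : E} (hz : z ∈ closure s) :
    dist x p ≤ dist ((2 : ℝ) • p - x) z := by
  by_contra! hlt
  have hq : (2 : ℝ) • p - z ∈ interior s := by
    have hdist : dist ((2 : ℝ) • p - z) x = dist ((2 : ℝ) • p - x) z := by
      simp only [dist_eq_norm]
      congr 1
      abel
    refine interior_maximal (ball_infDist_frontier_subset hx) isOpen_ball ?_
    rwa [mem_ball, hdist, ← hxp]
  have hp' := hs.combo_interior_closure_mem_interior hq hz (a := 1 / 2) (b := 1 / 2)
    (by norm_num) (by norm_num) (by norm_num)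
  exact hp.2 (by convert hp' using 1; module)

theorem Convex.signedInfDist_reflection (hs : Convex ℝ s) (hx : x ∈ s) (hp : p ∈ frontier s)
    (hxp : dist x p = infDist x (frontier s)) :
    signedInfDist s ((2 : ℝ) • p - x) = -dist x p := by
  rcases (dist_nonneg (x := x) (y := p)).eq_or_lt with hr | hr
  · obtain rfl : x = p := dist_eq_zero.1 hr.symm
    rw [two_smul, add_sub_cancel_right, signedInfDist, if_pos hx, ← hxp, ← hr, neg_zero]
  have hfar := fun z hz => hs.dist_le_dist_reflection hx hp hxp (z := z) hz
  have hout : (2 : ℝ) • p - x ∉ s := fun h => by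
    linarith [hfar _ (subset_closure h), dist_self ((2 : ℝ) • p - x)]
  rw [signedInfDist, if_neg hout, neg_inj]
  refine le_antisymm ?_ ((le_infDist ⟨p, hp⟩).2 fun z hz => hfar z hz.1)
  calc infDist ((2 : ℝ) • p - x) (frontier s) ≤ dist ((2 : ℝ) • p - x) p :=
        infDist_le_dist_of_mem hp
    _ = dist x p := by rw [dist_eq_norm, dist_eq_norm, ← norm_neg]; congr 1; module

theorem Convex.signedInfDist_sub_signedInfDist_reflection (hs : Convex ℝ s) (hx : x ∈ s)
    (hp : p ∈ frontier s) (hxp : dist x p = infDist x (frontier s)) :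
    signedInfDist s x - signedInfDist s ((2 : ℝ) • p - x) = dist x ((2 : ℝ) • p - x) := by
  rw [hs.signedInfDist_reflection hx hp hxp, signedInfDist, if_pos hx, ← hxp, dist_eq_norm,
    dist_eq_norm, show x - ((2 : ℝ) • p - x) = (2 : ℝ) • (x - p) by module, norm_smul,
    Real.norm_two]
  ring

end SignedDistance

theorem Continuous.integrable_of_ae_mem_isCompact {X F : Type*} [TopologicalSpace X] [T2Space X]
    [MeasurableSpace X] [OpensMeasurableSpace X] [NormedAddCommGroup F] {μ : Measure X}
    [IsFiniteMeasure μ] {K : Set X} (hK : IsCompact K) (hμK : ∀ᵐ x ∂μ, x ∈ K) {f : X → F}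
    (hf : Continuous f) : Integrable f μ := by
  rw [← Measure.restrict_eq_self_of_ae_mem hμK]
  exact hf.continuousOn.integrableOn_compact hK

theorem integral_sub_integral_le_integral_dist {X : Type*} [MetricSpace X]
    [SecondCountableTopology X] [MeasurableSpace X] [BorelSpace X] {u : X → ℝ}
    (hu : LipschitzWith 1 u) {μ ν : Measure X} [IsFiniteMeasure μ] {γ : Measure (X × X)}
    (hγμ : γ.map Prod.fst = μ) (hγν : γ.map Prod.snd = ν) {K L : Set X} (hK : IsCompact K)
    (hL : IsCompact L) (hμK : ∀ᵐ x ∂μ, x ∈ K) (hνL : ∀ᵐ y ∂ν, y ∈ L) :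
    ∫ x, u x ∂μ - ∫ y, u y ∂ν ≤ ∫ p, dist p.1 p.2 ∂γ := by
  subst hγμ hγν
  have hucont := hu.continuous
  have := Measure.isFiniteMeasure_of_map measurable_fst.aemeasurable (μ := γ)
  have hKL : ∀ᵐ p ∂γ, p ∈ K ×ˢ L :=
    (ae_of_ae_map measurable_fst.aemeasurable hμK).and
      (ae_of_ae_map measurable_snd.aemeasurable hνL)
  have hint {g : X × X → ℝ} (hg : Continuous g) : Integrable g γ :=
    hg.integrable_of_ae_mem_isCompact (hK.prod hL) hKL
  rw [integral_map measurable_fst.aemeasurable hucont.aestronglyMeasurable,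
    integral_map measurable_snd.aemeasurable hucont.aestronglyMeasurable,
    ← integral_sub (hint (g := fun p => u p.1) (by fun_prop))
      (hint (g := fun p => u p.2) (by fun_prop))]
  refine integral_mono (hint (by fun_prop)) (hint (continuous_fst.dist continuous_snd))
    fun p => ?_
  simpa using sub_le_iff_le_add'.2 (hu.le_add_mul p.1 p.2)

theorem integral_sub_integral_map_eq_of_ae_eq {X : Type*} [TopologicalSpace X] [T2Space X]
    [MeasurableSpace X] [OpensMeasurableSpace X] {u c : X → ℝ} (hu : Continuous u)
    {μ : Measure X} [IsFiniteMeasure μ] {T : X → X} (hT : Measurable T) {K L : Set X}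
    (hK : IsCompact K) (hL : IsCompact L) (hμK : ∀ᵐ x ∂μ, x ∈ K)
    (hTL : ∀ᵐ y ∂(μ.map T), y ∈ L)
    (hc : ∀ᵐ x ∂μ, u x - u (T x) = c x) :
    ∫ x, u x ∂μ - ∫ y, u y ∂(μ.map T) = ∫ x, c x ∂μ := by
  have hint := hu.integrable_of_ae_mem_isCompact hL hTL
  have hintT : Integrable (fun x => u (T x)) μ :=
    (integrable_map_measure hint.aestronglyMeasurable hT.aemeasurable).1 hint
  rw [integral_map hT.aemeasurable hu.aestronglyMeasurable,
    ← integral_sub (hu.integrable_of_ae_mem_isCompact hK hμK) hintT]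
  exact integral_congr_ae hc

theorem reflection_plan_optimal_general {d : ℕ}
    (Ω : Set (EuclideanSpace ℝ (Fin d))) (hΩc : IsCompact Ω) (hΩconv : Convex ℝ Ω)
    (fp : Measure (EuclideanSpace ℝ (Fin d))) [IsFiniteMeasure fp]
    (hsupp : fp Ωᶜ = 0)
    (P : EuclideanSpace ℝ (Fin d) → EuclideanSpace ℝ (Fin d)) (hPmeas : Measurable P)
    (hP : ∀ᵐ x ∂fp, P x ∈ frontier Ω ∧ dist x (P x) = Metric.infDist x (frontier Ω))
    (R : EuclideanSpace ℝ (Fin d) → EuclideanSpace ℝ (Fin d))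
    (hR : ∀ x, R x = (2 : ℝ) • P x - x)
    (u : EuclideanSpace ℝ (Fin d) → ℝ)
    (hu : u = fun x => if x ∈ Ω then Metric.infDist x (frontier Ω)
      else -Metric.infDist x (frontier Ω)) :
    (∫ x, u x ∂fp - ∫ y, u y ∂(fp.map R) = ∫ x, dist x (R x) ∂fp) ∧
    (∀ γ' : Measure (EuclideanSpace ℝ (Fin d) × EuclideanSpace ℝ (Fin d)),
        γ'.map Prod.fst = fp → γ'.map Prod.snd = fp.map R →
        ∫ p, dist p.1 p.2 ∂(fp.map fun x => (x, R x)) ≤ ∫ p, dist p.1 p.2 ∂γ') := by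
  obtain rfl : u = signedInfDist Ω := hu
  have hlip := lipschitzWith_signedInfDist Ω
  have hRmeas : Measurable R := by
    rw [funext hR]
    fun_prop
  have hΩ : ∀ᵐ x ∂fp, x ∈ Ω := mem_ae_iff.2 hsupp
  set K := (fun q : EuclideanSpace ℝ (Fin d) × EuclideanSpace ℝ (Fin d) =>
    (2 : ℝ) • q.1 - q.2) '' (Ω ×ˢ Ω)
  have hK : IsCompact K := (hΩc.prod hΩc).image (by fun_prop)
  have hRK : ∀ᵐ y ∂(fp.map R), y ∈ K := by
    refine (ae_map_iff hRmeas.aemeasurable hK.isClosed.measurableSet).2 ?_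
    filter_upwards [hΩ, hP] with x hx hPx
    exact ⟨(P x, x), ⟨hΩc.isClosed.frontier_subset hPx.1, hx⟩, (hR x).symm⟩
  have hgap : ∀ᵐ x ∂fp, signedInfDist Ω x - signedInfDist Ω (R x) = dist x (R x) := by
    filter_upwards [hΩ, hP] with x hx hPx
    rw [hR]
    exact hΩconv.signedInfDist_sub_signedInfDist_reflection hx hPx.1 hPx.2
  have hvalue :=
    integral_sub_integral_map_eq_of_ae_eq hlip.continuous hRmeas hΩc hK hΩ hRK hgap
  refine ⟨hvalue, fun γ' h1 h2 => ?_⟩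
  rw [integral_map (measurable_id'.prodMk hRmeas).aemeasurable
    (continuous_fst.dist continuous_snd).aestronglyMeasurable, ← hvalue]
  exact integral_sub_integral_le_integral_dist hlip h1 h2 hΩc hK hΩ hRK

/-- For `Ω` compact convex, `f⁺ ≪ Leb` supported in `Ω`, `P` the a.e. projection onto `∂Ω`,
`R x = 2 P x - x`, and `u` the signed distance to `∂Ω`:
`∫ u d(f⁺ - R#f⁺) = ∫ |x - R x| df⁺`, and consequently the plan `(id,R)#f⁺` is optimal
between `f⁺` and `R#f⁺` for the cost `|x - y|`. -/
theorem reflection_plan_optimal {d : ℕ}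
    (Ω : Set (EuclideanSpace ℝ (Fin d))) (hΩc : IsCompact Ω) (hΩconv : Convex ℝ Ω)
    (fp : Measure (EuclideanSpace ℝ (Fin d))) [IsFiniteMeasure fp]
    (habs : fp ≪ volume) (hsupp : fp Ωᶜ = 0)
    (P : EuclideanSpace ℝ (Fin d) → EuclideanSpace ℝ (Fin d)) (hPmeas : Measurable P)
    (hP : ∀ᵐ x ∂fp, P x ∈ frontier Ω ∧ dist x (P x) = Metric.infDist x (frontier Ω))
    (R : EuclideanSpace ℝ (Fin d) → EuclideanSpace ℝ (Fin d))
    (hR : ∀ x, R x = (2 : ℝ) • P x - x)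
    (u : EuclideanSpace ℝ (Fin d) → ℝ)
    (hu : u = fun x => if x ∈ Ω then Metric.infDist x (frontier Ω)
      else -Metric.infDist x (frontier Ω)) :
    (∫ x, u x ∂fp - ∫ y, u y ∂(fp.map R) = ∫ x, dist x (R x) ∂fp) ∧
    (∀ γ' : Measure (EuclideanSpace ℝ (Fin d) × EuclideanSpace ℝ (Fin d)),
        γ'.map Prod.fst = fp → γ'.map Prod.snd = fp.map R →
        ∫ p, dist p.1 p.2 ∂(fp.map fun x => (x, R x)) ≤ ∫ p, dist p.1 p.2 ∂γ') :=
  reflection_plan_optimal_general Ω hΩc hΩconv fp hsupp P hPmeas hP R hR u hu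
end

section
/- With T as above and x satisfying r ≤ |x−b| ≤ r + L, the eigenvalue λ(x) = (r/(2L))((r+2L)/|x−b| − 1) satisfies λ(x) ≥ r/(2(r+L)), and consequently the Jacobian determinant satisfies |det DT(x)| ≥ r^d / (2^d (r+L)^{d−1} L). -/
open Metric Set

/-- For `r ≤ |x-b| ≤ r + L`, the eigenvalue `λ(x) = (r/(2L))((r+2L)/|x-b| - 1)` satisfies
`λ(x) ≥ r/(2(r+L))`, and consequently the Jacobian determinant
`|det DT(x)| = (r/(2L)) λ(x)^{d-1}` satisfies `|det DT(x)| ≥ r^d / (2^d (r+L)^{d-1} L)`. -/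
theorem radial_map_jacobian_bound {d : ℕ} (hd : 1 ≤ d)
    (b x : EuclideanSpace ℝ (Fin d)) (r L : ℝ) (hr : 0 < r) (hL : 0 < L)
    (hlow : r ≤ ‖x - b‖) (hhigh : ‖x - b‖ ≤ r + L) :
    r / (2 * (r + L)) ≤ (r / (2 * L)) * ((r + 2 * L) / ‖x - b‖ - 1) ∧
    r ^ d / (2 ^ d * (r + L) ^ (d - 1) * L) ≤
      (r / (2 * L)) * ((r / (2 * L)) * ((r + 2 * L) / ‖x - b‖ - 1)) ^ (d - 1) := by
  set s := ‖x - b‖ with hs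
  have hs0 : 0 < s := lt_of_lt_of_le hr hlow
  have hrL : 0 < r + L := by linarith
  have h1 : (r + 2 * L) / (r + L) ≤ (r + 2 * L) / s :=
    div_le_div_of_nonneg_left (by linarith) hs0 hhigh
  have hlam : r / (2 * (r + L)) ≤ (r / (2 * L)) * ((r + 2 * L) / s - 1) := by
    have key : L / (r + L) ≤ (r + 2 * L) / s - 1 := by
      have : (r + 2 * L) / (r + L) - 1 = L / (r + L) := by field_simp; ring
      linarith
    have h2 : (r / (2 * L)) * (L / (r + L)) ≤ (r / (2 * L)) * ((r + 2 * L) / s - 1) :=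
      mul_le_mul_of_nonneg_left key (by positivity)
    have h3 : (r / (2 * L)) * (L / (r + L)) = r / (2 * (r + L)) := by
      field_simp
    linarith
  refine ⟨hlam, ?_⟩
  have hb0 : 0 ≤ r / (2 * (r + L)) := by positivity
  have hpow : (r / (2 * (r + L))) ^ (d - 1) ≤ ((r / (2 * L)) * ((r + 2 * L) / s - 1)) ^ (d - 1) :=
    pow_le_pow_left₀ hb0 hlam _
  have hfinal : r ^ d / (2 ^ d * (r + L) ^ (d - 1) * L)
      = (r / (2 * L)) * (r / (2 * (r + L))) ^ (d - 1) := by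
    obtain ⟨k, rfl⟩ : ∃ k, d = k + 1 := ⟨d - 1, (Nat.succ_pred_eq_of_pos hd).symm⟩
    simp only [Nat.add_sub_cancel]
    rw [div_pow, mul_pow, pow_succ, pow_succ]
    field_simp
  rw [hfinal]
  exact mul_le_mul_of_nonneg_left hpow (by positivity)
end

section
/- For ε ∈ [0,1], let w(ε) = 2ε(2+ε)/(3+2ε), let Δ_ε be the triangle with vertices (0,0), (2+ε,0), (0,w(ε)), and let A be the trapeze with vertices (0,0), (1,0), (1,4/5), (0,6/5). Then the Lebesgue measure of A ∩ Δ_ε equals ε, i.e. Leb²(A ∩ Δ_ε) = length([2, 2+ε]) for every ε ∈ [0,1]. -/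
/-!
Over `0 ≤ x ≤ 1` the hypotenuse of `Δ_ε` is the line `y = w(ε) (1 - x/(2+ε))`, and for `ε ≤ 1`
it lies below the slanted top `y = 6/5 - 2x/5` of `A` (the two coincide when `ε = 1`).
Hence `A ∩ Δ_ε` is the region under this line over `[0,1]`, whose area is
`w(ε) (1 - 1/(2(2+ε))) = w(ε) (3+2ε)/(2(2+ε)) = ε`.
-/

open MeasureTheory Set

/-- The trapeze with vertices `(0,0)`, `(1,0)`, `(1,4/5)`, `(0,6/5)`. -/
def trapezeA : Set (ℝ × ℝ) :=
  {p | 0 ≤ p.1 ∧ p.1 ≤ 1 ∧ 0 ≤ p.2 ∧ p.2 ≤ 6 / 5 - (2 / 5) * p.1}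

/-- `w(ε) = 2ε(2+ε)/(3+2ε)`. -/
noncomputable def wfun (ε : ℝ) : ℝ := 2 * ε * (2 + ε) / (3 + 2 * ε)

/-- The triangle with vertices `(0,0)`, `(2+ε,0)`, `(0,w(ε))`, written as
`{(x,y) : x ≥ 0, y ≥ 0, w(ε)·x + (2+ε)·y ≤ (2+ε)·w(ε)}`. -/
noncomputable def triangleΔ (ε : ℝ) : Set (ℝ × ℝ) :=
  {p | 0 ≤ p.1 ∧ 0 ≤ p.2 ∧ wfun ε * p.1 + (2 + ε) * p.2 ≤ (2 + ε) * wfun ε}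

section regionBetween

variable {α : Type*} [MeasurableSpace α] {μ : Measure α} {f g : α → ℝ} {s : Set α}

theorem volume_region_between_cc_eq_lintegral (hf : Measurable f) (hg : Measurable g)
    (hs : MeasurableSet s) :
    μ.prod volume {p : α × ℝ | p.1 ∈ s ∧ p.2 ∈ Icc (f p.1) (g p.1)} =
      ∫⁻ x in s, ENNReal.ofReal (g x - f x) ∂μ := by
  rw [Measure.prod_apply (measurableSet_region_between_cc hf hg hs), ← lintegral_indicator hs]
  congr 1 with x
  by_cases hx : x ∈ s
  · simp only [preimage, mem_ofPred_eq, hx, true_and, ofPred_mem_eq, Real.volume_Icc,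
      indicator_of_mem hx]
  · simp only [preimage, mem_ofPred_eq, hx, false_and, ofPred_false, measure_empty,
      indicator_of_notMem hx]

theorem volume_region_between_cc_eq_integral (hf : Measurable f) (hg : Measurable g)
    (hs : MeasurableSet s) (f_int : IntegrableOn f s μ) (g_int : IntegrableOn g s μ)
    (hfg : ∀ x ∈ s, f x ≤ g x) :
    μ.prod volume {p : α × ℝ | p.1 ∈ s ∧ p.2 ∈ Icc (f p.1) (g p.1)} =
      ENNReal.ofReal (∫ x in s, g x - f x ∂μ) := by
  rw [volume_region_between_cc_eq_lintegral hf hg hs]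
  exact (ofReal_integral_eq_lintegral_ofReal (g_int.sub f_int)
    ((ae_restrict_iff' hs).2 (.of_forall fun x hx => sub_nonneg.2 (hfg x hx)))).symm

end regionBetween

noncomputable def triangleHeight (ε x : ℝ) : ℝ := wfun ε * (1 - x / (2 + ε))

lemma continuous_triangleHeight (ε : ℝ) : Continuous (triangleHeight ε) := by
  unfold triangleHeight
  fun_prop

lemma triangleΔ_eq {ε : ℝ} (hε : -2 < ε) :
    triangleΔ ε = {p | 0 ≤ p.1 ∧ 0 ≤ p.2 ∧ p.2 ≤ triangleHeight ε p.1} := by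
  have h2 : 0 < 2 + ε := by linarith
  ext ⟨x, y⟩
  have scaled : (2 + ε) * triangleHeight ε x = (2 + ε) * wfun ε - wfun ε * x := by
    unfold triangleHeight
    field_simp
  simp only [triangleΔ, mem_ofPred_eq, ← mul_le_mul_iff_right₀ h2 (b := y), scaled]
  constructor <;> rintro ⟨hx, hy, h⟩ <;> exact ⟨hx, hy, by linarith⟩

lemma triangleHeight_le {ε x : ℝ} (hε : ε ∈ Icc (0 : ℝ) 1) (hx : x ≤ 1) :
    triangleHeight ε x ≤ 6 / 5 - 2 / 5 * x := by
  obtain ⟨hε0, hε1⟩ := hε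
  have h3 : 0 < 3 + 2 * ε := by linarith
  have height_eq : triangleHeight ε x = 2 * ε * (2 + ε - x) / (3 + 2 * ε) := by
    unfold triangleHeight wfun
    field_simp
  rw [height_eq, div_le_iff₀ h3]
  nlinarith [mul_nonneg (sub_nonneg.2 hε1) (sub_nonneg.2 hx)]

lemma triangleHeight_nonneg {ε x : ℝ} (hε : 0 ≤ ε) (hx : x ≤ 1) : 0 ≤ triangleHeight ε x := by
  unfold triangleHeight wfun
  have hfrac : x / (2 + ε) ≤ 1 := (div_le_one (by linarith)).2 (by linarith)
  have : 0 ≤ 1 - x / (2 + ε) := sub_nonneg.2 hfrac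
  positivity

lemma integral_triangleHeight {ε : ℝ} (hε : 0 ≤ ε) :
    ∫ x in (0 : ℝ)..1, triangleHeight ε x = ε := by
  have h2 : 2 + ε ≠ 0 := by positivity
  have h3 : 3 + 2 * ε ≠ 0 := by positivity
  calc ∫ x in (0 : ℝ)..1, triangleHeight ε x = wfun ε * (1 - 1 / (2 * (2 + ε))) := by
        simp only [triangleHeight, intervalIntegral.integral_const_mul]
        norm_num [integral_id, div_div]
    _ = ε := by
        unfold wfun
        field_simp
        ring

lemma trapezeA_inter_triangleΔ {ε : ℝ} (hε : ε ∈ Icc (0 : ℝ) 1) :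
    trapezeA ∩ triangleΔ ε =
      {p | p.1 ∈ Icc 0 1 ∧ p.2 ∈ Icc 0 (triangleHeight ε p.1)} := by
  rw [triangleΔ_eq (by linarith [hε.1])]
  ext ⟨x, y⟩
  simp only [trapezeA, mem_inter_iff, mem_ofPred_eq, mem_Icc]
  constructor
  · rintro ⟨⟨hx0, hx1, hy0, -⟩, -, -, hy⟩
    exact ⟨⟨hx0, hx1⟩, hy0, hy⟩
  · rintro ⟨⟨hx0, hx1⟩, hy0, hy⟩
    exact ⟨⟨hx0, hx1, hy0, hy.trans (triangleHeight_le hε hx1)⟩, hx0, hy0, hy⟩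

/-- Mass balance: the Lebesgue measure of `A ∩ Δ_ε` equals `ε`, i.e. the length of
`[2, 2+ε]`, for every `ε ∈ [0,1]`. -/
theorem area_inter_triangle (ε : ℝ) (hε : ε ∈ Icc (0 : ℝ) 1) :
    volume (trapezeA ∩ triangleΔ ε) = ENNReal.ofReal ε := by
  have hcont := continuous_triangleHeight ε
  rw [trapezeA_inter_triangleΔ hε, Measure.volume_eq_prod,
    volume_region_between_cc_eq_integral (f := fun _ => 0) measurable_const hcont.measurable
      measurableSet_Icc continuous_const.integrableOn_Icc hcont.integrableOn_Icc
      fun x hx => triangleHeight_nonneg hε.1 hx.2,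
    integral_Icc_eq_integral_Ioc, ← intervalIntegral.integral_of_le zero_le_one]
  simp only [sub_zero, integral_triangleHeight hε.1]
end

section
/- Let Ω ⊂ ℝ^d be compact, f⁺ ≪ Lebesgue supported in Ω, and γ an optimal transport plan from f⁺ to a measure supported on ∂Ω for the cost |x−y|. If every transport segment [x,y] in the support of γ satisfies [x,y] ∩ Ω = [x, P(x)] where P(x) is the projection of x onto ∂Ω, then the transport density of γ restricted to Ω equals the transport density of the plan (id, P)#f⁺. -/
open MeasureTheory Metric Set
open scoped MeasureTheory

/-- The transport density of a plan `γ`: `σ_γ(A) = ∫ H¹(A ∩ [x,y]) dγ(x,y)`. -/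
noncomputable def transportDensity {d : ℕ}
    (γ : Measure (EuclideanSpace ℝ (Fin d) × EuclideanSpace ℝ (Fin d)))
    (A : Set (EuclideanSpace ℝ (Fin d))) : ENNReal :=
  ∫⁻ p, μH[1] (A ∩ segment ℝ p.1 p.2) ∂γ

/-!
On almost every transport segment, `[x,y] ∩ Ω` is `[x, P x]`, so the integrand of
`σ_γ(A ∩ Ω)` only depends on the first marginal `f⁺` of `γ`, and integrating it against
`f⁺` is exactly integrating `H¹(A ∩ [x,y])` against `(id, P)#f⁺`. The one technical point is
the measurability of `(x, y) ↦ H¹(A ∩ [x,y])`, which follows from the formula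
`H¹(A ∩ [x,y]) = |y - x| · Leb{t ∈ [0,1] | x + t(y - x) ∈ A}` obtained by parametrising the
segment by arc length.
-/

section Segment

open scoped Pointwise

variable {E : Type*} [NormedAddCommGroup E] [NormedSpace ℝ E]

theorem isometry_lineMap_div_norm {x y : E} (hxy : x ≠ y) :
    Isometry fun u : ℝ => AffineMap.lineMap x y (u / ‖y - x‖) := by
  have hr : 0 < ‖y - x‖ := norm_pos_iff.2 (sub_ne_zero.2 hxy.symm)
  refine Isometry.of_dist_eq fun u v => ?_
  rw [dist_lineMap_lineMap, dist_comm x y, dist_eq_norm y x, Real.dist_eq, Real.dist_eq,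
    ← sub_div, abs_div, abs_of_pos hr, div_mul_cancel₀ _ hr.ne']

variable [MeasurableSpace E] [BorelSpace E]

theorem hausdorffMeasure_inter_segment (A : Set E) (x y : E) :
    μH[1] (A ∩ segment ℝ x y) =
      ‖y - x‖ₑ * volume {t ∈ Icc (0 : ℝ) 1 | AffineMap.lineMap x y t ∈ A} := by
  set B := {t ∈ Icc (0 : ℝ) 1 | AffineMap.lineMap x y t ∈ A}
  have hAB : A ∩ segment ℝ x y = AffineMap.lineMap x y '' B := by
    rw [segment_eq_image_lineMap, inter_comm, ← image_inter_preimage]; rfl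
  rcases eq_or_ne x y with rfl | hxy
  · have := Measure.nullSingletonClass_hausdorff E one_pos
    simp only [sub_self, enorm_zero, zero_mul]
    exact measure_mono_null (hAB ▸ (image_subset_range _ _).trans (by simp)) (measure_singleton x)
  · have hr : 0 < ‖y - x‖ := norm_pos_iff.2 (sub_ne_zero.2 hxy.symm)
    have hB : AffineMap.lineMap x y '' B =
        (fun u : ℝ => AffineMap.lineMap x y (u / ‖y - x‖)) '' (‖y - x‖ • B) := by
      rw [← image_smul, image_image]
      simp only [smul_eq_mul, mul_div_cancel_left₀ _ hr.ne']
    rw [hAB, hB, (isometry_lineMap_div_norm hxy).hausdorffMeasure_image (Or.inl zero_le_one),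
      hausdorffMeasure_real, Measure.addHaar_smul, Module.finrank_self, pow_one,
      abs_of_pos hr, ofReal_norm]

theorem measurable_hausdorffMeasure_inter_segment [SecondCountableTopology E] {A : Set E}
    (hA : MeasurableSet A) : Measurable fun p : E × E => μH[1] (A ∩ segment ℝ p.1 p.2) := by
  simp only [hausdorffMeasure_inter_segment]
  have hS : MeasurableSet
      {q : (E × E) × ℝ | q.2 ∈ Icc 0 1 ∧ AffineMap.lineMap q.1.1 q.1.2 q.2 ∈ A} :=
    (measurable_snd measurableSet_Icc).inter <|
      (continuous_fst.fst.lineMap continuous_fst.snd continuous_snd).measurable hA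
  exact (measurable_snd.sub measurable_fst).enorm.mul (measurable_measure_prodMk_left hS)

end Segment

section TransportDensity

variable {d : ℕ} {A : Set (EuclideanSpace ℝ (Fin d))}
  {P : EuclideanSpace ℝ (Fin d) → EuclideanSpace ℝ (Fin d)}

theorem transportDensity_map_graph (μ : Measure (EuclideanSpace ℝ (Fin d)))
    (hP : Measurable P) (hA : MeasurableSet A) :
    transportDensity (μ.map fun x => (x, P x)) A =
      ∫⁻ x, μH[1] (A ∩ segment ℝ x (P x)) ∂μ :=
  lintegral_map (measurable_hausdorffMeasure_inter_segment hA) (measurable_id.prodMk hP)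

theorem transportDensity_inter_of_ae_segment_inter_eq
    {γ : Measure (EuclideanSpace ℝ (Fin d) × EuclideanSpace ℝ (Fin d))}
    {Ω : Set (EuclideanSpace ℝ (Fin d))} (hP : Measurable P) (hA : MeasurableSet A)
    (hseg : ∀ᵐ p ∂γ, segment ℝ p.1 p.2 ∩ Ω = segment ℝ p.1 (P p.1)) :
    transportDensity γ (A ∩ Ω) = ∫⁻ x, μH[1] (A ∩ segment ℝ x (P x)) ∂(γ.map Prod.fst) := by
  have hmeas : Measurable fun x => μH[1] (A ∩ segment ℝ x (P x)) :=
    (measurable_hausdorffMeasure_inter_segment hA).comp (f := fun x => (x, P x))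
      (measurable_id.prodMk hP)
  rw [lintegral_map hmeas measurable_fst]
  refine lintegral_congr_ae ?_
  filter_upwards [hseg] with p hp
  rw [inter_assoc, inter_comm Ω, hp]

end TransportDensity

theorem transport_density_restriction_general {d : ℕ}
    (Ω : Set (EuclideanSpace ℝ (Fin d)))
    (fp : Measure (EuclideanSpace ℝ (Fin d)))
    (γ : Measure (EuclideanSpace ℝ (Fin d) × EuclideanSpace ℝ (Fin d)))
    (hγ1 : γ.map Prod.fst = fp)
    (P : EuclideanSpace ℝ (Fin d) → EuclideanSpace ℝ (Fin d)) (hPmeas : Measurable P)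
    (hseg : ∀ᵐ p ∂γ, segment ℝ p.1 p.2 ∩ Ω = segment ℝ p.1 (P p.1)) :
    ∀ A : Set (EuclideanSpace ℝ (Fin d)), MeasurableSet A →
      transportDensity γ (A ∩ Ω) = transportDensity (fp.map fun x => (x, P x)) A := by
  intro A hA
  rw [transportDensity_inter_of_ae_segment_inter_eq hPmeas hA hseg, hγ1,
    transportDensity_map_graph fp hPmeas hA]

/-- If `γ` is an optimal plan from `f⁺ ≪ Leb` (supported in a compact `Ω`) to a measure on
`∂Ω`, and every transport segment satisfies `[x,y] ∩ Ω = [x, P x]` with `P` the projection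
onto `∂Ω`, then the transport density of `γ` restricted to `Ω` equals the transport density
of the projection plan `(id, P)#f⁺`. -/
theorem transport_density_restriction {d : ℕ}
    (Ω : Set (EuclideanSpace ℝ (Fin d))) (hΩ : IsCompact Ω)
    (fp : Measure (EuclideanSpace ℝ (Fin d))) [IsFiniteMeasure fp]
    (habs : fp ≪ volume) (hsupp : fp Ωᶜ = 0)
    (γ : Measure (EuclideanSpace ℝ (Fin d) × EuclideanSpace ℝ (Fin d)))
    (hγ1 : γ.map Prod.fst = fp)
    (hγ2 : (γ.map Prod.snd) (frontier Ω)ᶜ = 0)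
    (hopt : ∀ γ' : Measure (EuclideanSpace ℝ (Fin d) × EuclideanSpace ℝ (Fin d)),
      γ'.map Prod.fst = fp → γ'.map Prod.snd = γ.map Prod.snd →
      ∫ p, dist p.1 p.2 ∂γ ≤ ∫ p, dist p.1 p.2 ∂γ')
    (P : EuclideanSpace ℝ (Fin d) → EuclideanSpace ℝ (Fin d)) (hPmeas : Measurable P)
    (hP : ∀ᵐ x ∂fp, P x ∈ frontier Ω ∧ dist x (P x) = Metric.infDist x (frontier Ω))
    (hseg : ∀ᵐ p ∂γ, segment ℝ p.1 p.2 ∩ Ω = segment ℝ p.1 (P p.1)) :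
    ∀ A : Set (EuclideanSpace ℝ (Fin d)), MeasurableSet A →
      transportDensity γ (A ∩ Ω) = transportDensity (fp.map fun x => (x, P x)) A :=
  transport_density_restriction_general Ω fp γ hγ1 P hPmeas hseg
end

section
/- If Ω ⊂ ℝ^d satisfies a uniform exterior ball condition of radius r > 0 and f⁺ ∈ L^∞(Ω) is a nonnegative density, then the pushforward (P_{∂Ω})#(f⁺ dx) is absolutely continuous with respect to the surface measure H^{d−1}⌊∂Ω with bounded density, with bound depending only on d, r, diam(Ω), and ‖f⁺‖_∞. -/
/-
If `x ∈ ∂Ω` is a nearest boundary point of `z ∈ Ω` and `B(x + r ν, r)` is an exterior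
ball at `x`, then `d(z, ∂Ω) ≤ |z - (x + r ν)| - r`, which forces `z = x - t ν` with
`t = d(z, ∂Ω)`. Comparing the exterior balls at two feet `x₁, x₂` with `|x₁ - x₂| ≤ δ` shows that
points of depths `t₁ ≈ t₂ ≥ δ` satisfy `t₂ |ν₁ - ν₂| ≲ (1 + L/r) δ`. Hence the points of `Ω`
projecting into a boundary piece of diameter `δ` split into about `L/δ` depth slices of diameter
`O(δ)`, of total volume `O(δ^(d-1))`. Summing over covers of `A ⊆ ∂Ω` bounds the volume of
`P⁻¹(A) ∩ Ω` by a multiple of `H^(d-1)(A)`, and the density contributes the factor `M`.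
-/

open MeasureTheory Metric Set Filter
open scoped MeasureTheory ENNReal Topology RealInnerProductSpace

/-- `Ω` satisfies a uniform exterior ball condition of radius `r`: for every boundary point
`x` there is `y ∉ Ω` with `|x - y| = r` and `B(y,r) ∩ Ω = ∅`. -/
def ExteriorBallCondition {d : ℕ} (Ω : Set (EuclideanSpace ℝ (Fin d))) (r : ℝ) : Prop :=
  ∀ x ∈ frontier Ω, ∃ y, y ∉ Ω ∧ dist x y = r ∧ Metric.ball y r ∩ Ω = ∅

theorem abs_sub_lt_of_floor_div_eq {a b δ : ℝ} (hδ : 0 < δ) (ha : 0 ≤ a) (hb : 0 ≤ b)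
    (h : ⌊a / δ⌋₊ = ⌊b / δ⌋₊) : |a - b| < δ := by
  have ha₁ := Nat.floor_le (div_nonneg ha hδ.le)
  have ha₂ := Nat.lt_floor_add_one (a / δ)
  have hb₁ := Nat.floor_le (div_nonneg hb hδ.le)
  have hb₂ := Nat.lt_floor_add_one (b / δ)
  rw [h] at ha₁ ha₂
  have hlt : |a / δ - b / δ| < 1 := by rw [abs_sub_lt_iff]; constructor <;> linarith
  calc |a - b| = δ * |a / δ - b / δ| := by
        rw [← sub_div, abs_div, abs_of_pos hδ, mul_div_cancel₀ _ hδ.ne']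
    _ < δ := mul_lt_of_lt_one_right hδ hlt

theorem lt_or_lt_two_mul_of_floor_div_eq {a b δ : ℝ} (hδ : 0 < δ) (ha : 0 ≤ a)
    (h : ⌊a / δ⌋₊ = ⌊b / δ⌋₊) : b < δ ∨ b < 2 * a := by
  have ha₁ := Nat.floor_le (div_nonneg ha hδ.le)
  have hb₂ := Nat.lt_floor_add_one (b / δ)
  rw [← h, div_lt_iff₀ hδ] at hb₂
  rw [le_div_iff₀ hδ] at ha₁
  rcases Nat.eq_zero_or_pos ⌊a / δ⌋₊ with hk | hk
  · left; simpa [hk] using hb₂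
  · right
    have : (1 : ℝ) ≤ ⌊a / δ⌋₊ := by exact_mod_cast hk
    nlinarith

section NormedSpace

variable {V : Type*} [NormedAddCommGroup V] [NormedSpace ℝ V]

theorem exists_mem_segment_mem_frontier {Ω : Set V} {z w : V} (hz : z ∈ Ω) (hw : w ∉ Ω) :
    ∃ p ∈ segment ℝ z w, p ∈ frontier Ω := by
  by_contra! h
  have hcover : segment ℝ z w ⊆ interior Ω ∪ (closure Ω)ᶜ := fun p hp => by
    by_cases hp' : p ∈ closure Ω
    · rw [closure_eq_interior_union_frontier] at hp'
      exact Or.inl (hp'.resolve_right (h p hp))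
    · exact Or.inr hp'
  have hz' : z ∈ interior Ω :=
    (hcover (left_mem_segment ℝ z w)).resolve_right (not_not.2 (subset_closure hz))
  have hsub := (convex_segment z w).isPreconnected.subset_left_of_subset_union isOpen_interior
    isClosed_closure.isOpen_compl (disjoint_compl_right_iff_subset.2 interior_subset_closure)
    hcover ⟨z, left_mem_segment ℝ z w, hz'⟩
  exact hw (interior_subset (hsub (right_mem_segment ℝ z w)))

theorem infDist_frontier_le_infDist_compl {Ω : Set V} {z : V} (hz : z ∈ Ω) :
    infDist z (frontier Ω) ≤ infDist z Ωᶜ := by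
  rcases Ωᶜ.eq_empty_or_nonempty with h | h
  · simp [compl_empty_iff.1 h]
  refine (le_infDist h).2 fun w hw => ?_
  obtain ⟨p, hp, hpΩ⟩ := exists_mem_segment_mem_frontier hz hw
  have hp' : p ∈ closedBall z (dist w z) := (convex_closedBall z _).segment_subset
    (mem_closedBall_self dist_nonneg) (mem_closedBall.2 le_rfl) hp
  rw [mem_closedBall, dist_comm, dist_comm w] at hp'
  exact (infDist_le_dist_of_mem hpΩ).trans hp'

theorem add_infDist_frontier_le_dist {Ω : Set V} {z y : V} {r : ℝ} (hr : 0 < r) (hz : z ∈ Ω)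
    (hball : ball y r ∩ Ω = ∅) : r + infDist z (frontier Ω) ≤ dist z y := by
  grw [infDist_frontier_le_infDist_compl hz]
  rcases (infDist_nonneg (x := z) (s := Ωᶜ)).eq_or_lt with h | h
  · rw [← h, add_zero]
    by_contra! hzy
    exact hball.subset ⟨mem_ball.2 hzy, hz⟩
  · rw [add_comm, ← disjoint_ball_ball_iff h hr]
    exact (disjoint_iff_inter_eq_empty.2 hball).symm.mono_left ball_infDist_compl_subset

theorem eq_sub_dist_smul_of_dist_eq_infDist_frontier [StrictConvexSpace ℝ V] {Ω : Set V}
    {x z ν : V} {r : ℝ} (hr : 0 < r) (hν : ‖ν‖ = 1) (hball : ball (x + r • ν) r ∩ Ω = ∅)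
    (hz : z ∈ Ω) (hzx : dist z x = infDist z (frontier Ω)) : z = x - dist z x • ν := by
  have hrν : ‖-(r • ν)‖ = r := by rw [norm_neg, norm_smul, hν, Real.norm_of_nonneg hr.le, mul_one]
  have hsplit : z - (x + r • ν) = -(r • ν) + (z - x) := by abel
  have hle := add_infDist_frontier_le_dist hr hz hball
  rw [← hzx, dist_eq_norm z (x + r • ν), hsplit, dist_eq_norm] at hle
  have hray : SameRay ℝ (-(r • ν)) (z - x) := sameRay_iff_norm_add.2 <|
    le_antisymm (norm_add_le _ _) (by rw [hrν]; exact hle)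
  obtain ⟨c, hc, hcz⟩ := hray.exists_nonneg_left (by rw [← norm_ne_zero_iff, hrν]; exact hr.ne')
  have hc' : c * r = dist z x := by
    rw [dist_eq_norm, ← hcz, norm_smul, hrν, Real.norm_of_nonneg hc]
  calc z = x + c • -(r • ν) := by rw [hcz]; abel
    _ = x - dist z x • ν := by rw [← hc']; module

theorem norm_sub_smul_sub_sub_smul_le {x₁ x₂ ν₁ ν₂ : V} {t₁ t₂ : ℝ} (hν₁ : ‖ν₁‖ = 1)
    (ht₂ : 0 ≤ t₂) :
    ‖(x₁ - t₁ • ν₁) - (x₂ - t₂ • ν₂)‖ ≤ ‖x₁ - x₂‖ + |t₁ - t₂| + t₂ * ‖ν₁ - ν₂‖ := by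
  calc ‖(x₁ - t₁ • ν₁) - (x₂ - t₂ • ν₂)‖ = ‖(x₁ - x₂) - (t₁ - t₂) • ν₁ - t₂ • (ν₁ - ν₂)‖ := by
        congr 1; module
    _ ≤ ‖x₁ - x₂‖ + ‖(t₁ - t₂) • ν₁‖ + ‖t₂ • (ν₁ - ν₂)‖ :=
        (norm_sub_le _ _).trans (add_le_add_left (norm_sub_le _ _) _)
    _ = ‖x₁ - x₂‖ + |t₁ - t₂| + t₂ * ‖ν₁ - ν₂‖ := by
        rw [norm_smul, norm_smul, hν₁, mul_one, Real.norm_eq_abs, Real.norm_of_nonneg ht₂]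

end NormedSpace

section InnerProductSpace

variable {V : Type*} [NormedAddCommGroup V] [InnerProductSpace ℝ V]

/- For `zᵢ = xᵢ - tᵢ νᵢ` with nearest boundary point `xᵢ` and exterior ball `B(xᵢ + r νᵢ, r)`,
and `u = x₁ - x₂`: `h₁` says that `z₁` stays `r + t₁` away from the centre `x₂ + r ν₂`, `h₂` that
`x₂` avoids the exterior ball at `x₁`, and `h₃` that `x₁` is not closer to `z₂` than `x₂`. -/
theorem mul_sq_norm_sub_le_of_le_norm {u ν₁ ν₂ : V} {r t₁ t₂ : ℝ} (hν₁ : ‖ν₁‖ = 1)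
    (hν₂ : ‖ν₂‖ = 1) (hr : 0 ≤ r) (ht₁ : 0 ≤ t₁) (ht₂ : 0 ≤ t₂)
    (h₁ : r + t₁ ≤ ‖u - t₁ • ν₁ - r • ν₂‖) (h₂ : r ≤ ‖u + r • ν₁‖) (h₃ : t₂ ≤ ‖u + t₂ • ν₂‖) :
    t₁ * t₂ * r ^ 2 * ‖ν₁ - ν₂‖ ^ 2 ≤ ‖u‖ ^ 2 * (r * t₂ + t₁ * t₂ + r ^ 2) := by
  have sq_le {a : ℝ} {v : V} (ha : 0 ≤ a) (h : a ≤ ‖v‖) : a ^ 2 ≤ ⟪v, v⟫ := by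
    rw [real_inner_self_eq_norm_sq]; gcongr
  replace h₁ := sq_le (by positivity) h₁
  replace h₂ := sq_le hr h₂
  replace h₃ := sq_le ht₂ h₃
  rw [← real_inner_self_eq_norm_sq, ← real_inner_self_eq_norm_sq]
  simp only [inner_sub_left, inner_sub_right, inner_add_left, inner_add_right, real_inner_smul_left,
    real_inner_smul_right, real_inner_self_eq_norm_sq, norm_smul, mul_pow, Real.norm_eq_abs,
    sq_abs, hν₁, hν₂, real_inner_comm u, real_inner_comm ν₁ ν₂] at h₁ h₂ h₃ ⊢
  linear_combination (r * t₂) * h₁ + (t₁ * t₂) * h₂ + r ^ 2 * h₃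

theorem mul_norm_sub_le_of_le_norm {u ν₁ ν₂ : V} {r t₁ t₂ L : ℝ} (hν₁ : ‖ν₁‖ = 1)
    (hν₂ : ‖ν₂‖ = 1) (hr : 0 < r) (ht₁ : 0 < t₁) (ht₂ : 0 ≤ t₂) (ht₂₁ : t₂ ≤ 2 * t₁)
    (ht₂L : t₂ ≤ L) (h₁ : r + t₁ ≤ ‖u - t₁ • ν₁ - r • ν₂‖) (h₂ : r ≤ ‖u + r • ν₁‖)
    (h₃ : t₂ ≤ ‖u + t₂ • ν₂‖) :
    r * (t₂ * ‖ν₁ - ν₂‖) ≤ 2 * (r + L) * ‖u‖ := by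
  have key := mul_sq_norm_sub_le_of_le_norm hν₁ hν₂ hr.le ht₁.le ht₂ h₁ h₂ h₃
  have hL : 0 ≤ L := ht₂.trans ht₂L
  have hbound : t₂ * (r * t₂ + t₁ * t₂ + r ^ 2) ≤ t₁ * (2 * (r + L)) ^ 2 := by
    have hsq : t₂ * t₂ ≤ 2 * t₁ * L := mul_le_mul ht₂₁ ht₂L ht₂ (by positivity)
    nlinarith [mul_le_mul_of_nonneg_left hsq hr.le, mul_le_mul ht₂L ht₂L ht₂ hL,
      mul_le_mul_of_nonneg_left ht₂₁ (sq_nonneg r), mul_nonneg ht₁.le (mul_nonneg hr.le hL)]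
  refine le_of_sq_le_sq ?_ (by positivity)
  refine le_of_mul_le_mul_left ?_ ht₁
  calc t₁ * (r * (t₂ * ‖ν₁ - ν₂‖)) ^ 2 = t₂ * (t₁ * t₂ * r ^ 2 * ‖ν₁ - ν₂‖ ^ 2) := by ring
    _ ≤ t₂ * (‖u‖ ^ 2 * (r * t₂ + t₁ * t₂ + r ^ 2)) := by gcongr
    _ = ‖u‖ ^ 2 * (t₂ * (r * t₂ + t₁ * t₂ + r ^ 2)) := by ring
    _ ≤ ‖u‖ ^ 2 * (t₁ * (2 * (r + L)) ^ 2) := by gcongr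
    _ = t₁ * (2 * (r + L) * ‖u‖) ^ 2 := by ring

end InnerProductSpace

theorem ExteriorBallCondition.exists_unit_normal {d : ℕ} {Ω : Set (EuclideanSpace ℝ (Fin d))}
    {r : ℝ} {x : EuclideanSpace ℝ (Fin d)} (h : ExteriorBallCondition Ω r) (hr : 0 < r)
    (hx : x ∈ frontier Ω) : ∃ ν, ‖ν‖ = 1 ∧ ball (x + r • ν) r ∩ Ω = ∅ := by
  obtain ⟨y, -, hxy, hball⟩ := h x hx
  refine ⟨r⁻¹ • (y - x), ?_, ?_⟩
  · rw [norm_smul, ← dist_eq_norm, dist_comm, hxy, Real.norm_of_nonneg (inv_nonneg.2 hr.le),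
      inv_mul_cancel₀ hr.ne']
  · rwa [smul_smul, mul_inv_cancel₀ hr.ne', one_smul, add_sub_cancel]

/-- Contains, up to a null set, `P⁻¹(A) ∩ Ω` for every a.e. nearest-point projection `P`
onto `∂Ω`. -/
def projectionTube {X : Type*} [MetricSpace X] (Ω A : Set X) : Set X :=
  {z ∈ Ω | ∃ x ∈ A ∩ frontier Ω, dist z x = infDist z (frontier Ω)}

section Tube

variable {d : ℕ} {Ω : Set (EuclideanSpace ℝ (Fin d))} {r L δ : ℝ}

theorem infDist_frontier_le_of_mem_projectionTube (hΩ : IsCompact Ω) (hdiam : diam Ω ≤ L)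
    {A : Set (EuclideanSpace ℝ (Fin d))} {z : EuclideanSpace ℝ (Fin d)}
    (hz : z ∈ projectionTube Ω A) : infDist z (frontier Ω) ≤ L := by
  obtain ⟨hzΩ, x, ⟨-, hx⟩, hzx⟩ := hz
  rw [← hzx]
  exact (dist_le_diam_of_mem hΩ.isBounded hzΩ (hΩ.isClosed.frontier_subset hx)).trans hdiam

theorem dist_le_of_mem_projectionTube (hr : 0 < r) (hδ : 0 < δ) (hΩ : IsCompact Ω)
    (hext : ExteriorBallCondition Ω r) (hdiam : diam Ω ≤ L) {E : Set (EuclideanSpace ℝ (Fin d))}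
    (hE : ∀ x₁ ∈ E, ∀ x₂ ∈ E, dist x₁ x₂ ≤ δ) {z₁ z₂ : EuclideanSpace ℝ (Fin d)}
    (hz₁ : z₁ ∈ projectionTube Ω E) (hz₂ : z₂ ∈ projectionTube Ω E)
    (hk : ⌊infDist z₁ (frontier Ω) / δ⌋₊ = ⌊infDist z₂ (frontier Ω) / δ⌋₊) :
    dist z₁ z₂ ≤ (4 + 2 * L / r) * δ := by
  have ht₂L := infDist_frontier_le_of_mem_projectionTube hΩ hdiam hz₂
  have hL : 0 ≤ L := diam_nonneg.trans hdiam
  obtain ⟨hz₁Ω, x₁, ⟨hx₁E, hx₁⟩, hzx₁⟩ := hz₁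
  obtain ⟨hz₂Ω, x₂, ⟨hx₂E, hx₂⟩, hzx₂⟩ := hz₂
  obtain ⟨ν₁, hν₁, hball₁⟩ := hext.exists_unit_normal hr hx₁
  obtain ⟨ν₂, hν₂, hball₂⟩ := hext.exists_unit_normal hr hx₂
  have hz₁_eq := eq_sub_dist_smul_of_dist_eq_infDist_frontier hr hν₁ hball₁ hz₁Ω hzx₁
  have hz₂_eq := eq_sub_dist_smul_of_dist_eq_infDist_frontier hr hν₂ hball₂ hz₂Ω hzx₂
  rw [← hzx₁, ← hzx₂] at hk
  rw [← hzx₂] at ht₂L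
  set t₁ := dist z₁ x₁
  set t₂ := dist z₂ x₂
  have hx : ‖x₁ - x₂‖ ≤ δ := dist_eq_norm x₁ x₂ ▸ hE x₁ hx₁E x₂ hx₂E
  have hnormal : t₂ * ‖ν₁ - ν₂‖ ≤ 2 * (1 + L / r) * δ := by
    rcases lt_or_lt_two_mul_of_floor_div_eq hδ dist_nonneg hk with hsmall | hcomp
    · have : ‖ν₁ - ν₂‖ ≤ 2 := (norm_sub_le _ _).trans (by rw [hν₁, hν₂]; norm_num)
      calc t₂ * ‖ν₁ - ν₂‖ ≤ δ * 2 := by gcongr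
        _ ≤ 2 * (1 + L / r) * δ := by nlinarith [div_nonneg hL hr.le]
    · have h₁ : r + t₁ ≤ ‖(x₁ - x₂) - t₁ • ν₁ - r • ν₂‖ := by
        have := add_infDist_frontier_le_dist hr hz₁Ω hball₂
        rwa [← hzx₁, dist_eq_norm, hz₁_eq,
          show x₁ - t₁ • ν₁ - (x₂ + r • ν₂) = (x₁ - x₂) - t₁ • ν₁ - r • ν₂ by abel] at this
      have h₂ : r ≤ ‖(x₁ - x₂) + r • ν₁‖ := by
        by_contra! h
        refine hball₁.subset ⟨?_, hΩ.isClosed.frontier_subset hx₂⟩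
        rwa [mem_ball, dist_comm, dist_eq_norm,
          show x₁ + r • ν₁ - x₂ = (x₁ - x₂) + r • ν₁ by abel]
      have h₃ : t₂ ≤ ‖(x₁ - x₂) + t₂ • ν₂‖ := by
        have := infDist_le_dist_of_mem (x := z₂) hx₁
        rwa [← hzx₂, dist_comm, dist_eq_norm, hz₂_eq,
          show x₁ - (x₂ - t₂ • ν₂) = (x₁ - x₂) + t₂ • ν₂ by abel] at this
      have := mul_norm_sub_le_of_le_norm hν₁ hν₂ hr (by linarith [dist_nonneg (x := z₂) (y := x₂)])
        dist_nonneg hcomp.le ht₂L h₁ h₂ h₃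
      rw [← mul_le_mul_iff_of_pos_left hr]
      calc r * (t₂ * ‖ν₁ - ν₂‖) ≤ 2 * (r + L) * ‖x₁ - x₂‖ := this
        _ ≤ 2 * (r + L) * δ := by gcongr
        _ = r * (2 * (1 + L / r) * δ) := by field_simp
  have ht : |t₁ - t₂| ≤ δ := (abs_sub_lt_of_floor_div_eq hδ dist_nonneg dist_nonneg hk).le
  calc dist z₁ z₂ ≤ ‖x₁ - x₂‖ + |t₁ - t₂| + t₂ * ‖ν₁ - ν₂‖ := by
        rw [dist_eq_norm, hz₁_eq, hz₂_eq]; exact norm_sub_smul_sub_sub_smul_le hν₁ dist_nonneg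
    _ ≤ δ + δ + 2 * (1 + L / r) * δ := by gcongr
    _ = (4 + 2 * L / r) * δ := by ring

end Tube

section Volume

variable {d : ℕ} {Ω : Set (EuclideanSpace ℝ (Fin d))} {r L δ : ℝ}

/-- The tube over a piece of `∂Ω` of diameter `δ` consists of at most `L/δ + 1` slices of diameter
`(4 + 2L/r) δ`. -/
noncomputable def tubeConst (d : ℕ) (r L : ℝ) : ℝ≥0∞ :=
  ENNReal.ofReal ((L + r) * (4 + 2 * L / r) ^ d) *
    volume (closedBall (0 : EuclideanSpace ℝ (Fin d)) 1)

theorem tubeConst_ne_top : tubeConst d r L ≠ ∞ :=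
  ENNReal.mul_ne_top ENNReal.ofReal_ne_top measure_closedBall_lt_top.ne

theorem tubeConst_ne_zero (hr : 0 < r) (hL : 0 ≤ L) : tubeConst d r L ≠ 0 :=
  mul_ne_zero (ENNReal.ofReal_pos.2 (by positivity)).ne'
    (measure_closedBall_pos volume _ one_pos).ne'

theorem volume_projectionTube_le (hr : 0 < r) (hΩ : IsCompact Ω)
    (hext : ExteriorBallCondition Ω r) (hdiam : diam Ω ≤ L) (hδ : 0 < δ) (hδr : δ ≤ r)
    {E : Set (EuclideanSpace ℝ (Fin d))} (hE : ∀ x₁ ∈ E, ∀ x₂ ∈ E, dist x₁ x₂ ≤ δ) :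
    volume (projectionTube Ω E) ≤ tubeConst d r L * ENNReal.ofReal δ ^ ((d : ℝ) - 1) := by
  set κ := 4 + 2 * L / r
  set N := ⌊L / δ⌋₊
  have hL : 0 ≤ L := diam_nonneg.trans hdiam
  let slice (k : ℕ) := {z ∈ projectionTube Ω E | ⌊infDist z (frontier Ω) / δ⌋₊ = k}
  have hcover : projectionTube Ω E ⊆ ⋃ k ∈ Finset.range (N + 1), slice k := fun z hz =>
    mem_biUnion (Finset.mem_range_succ_iff.2 <| Nat.floor_le_floor <|
      div_le_div_of_nonneg_right (infDist_frontier_le_of_mem_projectionTube hΩ hdiam hz) hδ.le)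
      ⟨hz, rfl⟩
  have hslice (k : ℕ) : volume (slice k) ≤
      ENNReal.ofReal ((κ * δ) ^ d) * volume (closedBall (0 : EuclideanSpace ℝ (Fin d)) 1) := by
    rcases (slice k).eq_empty_or_nonempty with h | ⟨z₀, hz₀⟩
    · simp [h]
    calc volume (slice k) ≤ volume (closedBall z₀ (κ * δ)) := measure_mono fun z hz =>
          dist_le_of_mem_projectionTube hr hδ hΩ hext hdiam hE hz.1 hz₀.1 (hz.2.trans hz₀.2.symm)
      _ = _ := by
          rw [Measure.addHaar_closedBall' _ _ (by positivity), finrank_euclideanSpace_fin]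
  have hcount : ((N : ℝ) + 1) * (κ * δ) ^ d ≤ (L + r) * κ ^ d * δ ^ ((d : ℝ) - 1) := by
    have hN : (N : ℝ) * δ ≤ L := (le_div_iff₀ hδ).1 (Nat.floor_le (by positivity))
    have hpow : δ ^ d = δ * δ ^ ((d : ℝ) - 1) := by
      rw [Real.rpow_sub_one hδ.ne', Real.rpow_natCast, mul_div_cancel₀ _ hδ.ne']
    calc ((N : ℝ) + 1) * (κ * δ) ^ d = ((N : ℝ) * δ + δ) * κ ^ d * δ ^ ((d : ℝ) - 1) := by
          rw [mul_pow, hpow]; ring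
      _ ≤ (L + r) * κ ^ d * δ ^ ((d : ℝ) - 1) := by gcongr
  calc volume (projectionTube Ω E)
      ≤ ∑ k ∈ Finset.range (N + 1), volume (slice k) :=
        (measure_mono hcover).trans (measure_biUnion_finset_le _ _)
    _ ≤ (N + 1) * (ENNReal.ofReal ((κ * δ) ^ d) *
          volume (closedBall (0 : EuclideanSpace ℝ (Fin d)) 1)) := by
        simpa using Finset.sum_le_card_nsmul (Finset.range (N + 1)) _ _ fun k _ => hslice k
    _ = ENNReal.ofReal (((N : ℝ) + 1) * (κ * δ) ^ d) *
          volume (closedBall (0 : EuclideanSpace ℝ (Fin d)) 1) := by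
        rw [← mul_assoc, ENNReal.ofReal_mul (by positivity)]; norm_cast
    _ ≤ ENNReal.ofReal ((L + r) * κ ^ d * δ ^ ((d : ℝ) - 1)) *
          volume (closedBall (0 : EuclideanSpace ℝ (Fin d)) 1) := by gcongr
    _ = tubeConst d r L * ENNReal.ofReal δ ^ ((d : ℝ) - 1) := by
        rw [tubeConst, ENNReal.ofReal_rpow_of_pos hδ, ENNReal.ofReal_mul (by positivity)]; ring

end Volume

section Hausdorff

variable {d : ℕ} {Ω : Set (EuclideanSpace ℝ (Fin d))} {r L : ℝ}

theorem volume_projectionTube_le_ediam (hr : 0 < r) (hΩ : IsCompact Ω)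
    (hext : ExteriorBallCondition Ω r) (hdiam : diam Ω ≤ L) {A : Set (EuclideanSpace ℝ (Fin d))}
    (hA : ediam A < ENNReal.ofReal r) :
    volume (projectionTube Ω A) ≤ tubeConst d r L * ediam A ^ ((d : ℝ) - 1) := by
  set e := (ediam A).toReal
  -- Passing to the limit `δ ↓ diam A` also covers `diam A = 0`.
  have hlim : Tendsto (fun δ : ℝ => tubeConst d r L * ENNReal.ofReal δ ^ ((d : ℝ) - 1))
      (𝓝[>] e) (𝓝 (tubeConst d r L * ediam A ^ ((d : ℝ) - 1))) := by
    rw [← ENNReal.ofReal_toReal hA.ne_top]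
    exact ENNReal.Tendsto.const_mul ((ENNReal.continuous_rpow_const.comp
      ENNReal.continuous_ofReal).tendsto e |>.mono_left nhdsWithin_le_nhds) (Or.inr tubeConst_ne_top)
  refine ge_of_tendsto hlim ?_
  filter_upwards [Ioo_mem_nhdsGT (ENNReal.toReal_lt_of_lt_ofReal hA)] with δ hδ
  refine volume_projectionTube_le hr hΩ hext hdiam (ENNReal.toReal_nonneg.trans_lt hδ.1) hδ.2.le
    fun x₁ h₁ x₂ h₂ => ?_
  rw [dist_edist]
  exact (ENNReal.toReal_mono hA.ne_top (edist_le_ediam_of_mem h₁ h₂)).trans hδ.1.le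

theorem map_le_smul_hausdorffMeasure (hr : 0 < r) (hΩ : IsCompact Ω)
    (hext : ExteriorBallCondition Ω r) (hdiam : diam Ω ≤ L)
    {P : EuclideanSpace ℝ (Fin d) → EuclideanSpace ℝ (Fin d)} (hP : Measurable P)
    (hPproj : ∀ᵐ z ∂volume.restrict Ω,
      P z ∈ frontier Ω ∧ dist z (P z) = infDist z (frontier Ω)) :
    (volume.restrict Ω).map P ≤ tubeConst d r L • (μH[(d : ℝ) - 1]).restrict (frontier Ω) := by
  set μ := (volume.restrict Ω).map P
  have hpreimage (t : Set (EuclideanSpace ℝ (Fin d))) :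
      volume.restrict Ω (P ⁻¹' t) ≤ volume (projectionTube Ω t) := by
    refine (measure_mono_ae ?_).trans (Measure.restrict_le_self _)
    filter_upwards [hPproj, ae_restrict_mem hΩ.isClosed.measurableSet] with z hz hzΩ hzt
    exact ⟨hzΩ, P z, ⟨hzt, hz.1⟩, hz.2⟩
  have hμ : μ ≤ tubeConst d r L • μH[(d : ℝ) - 1] := by
    refine (Measure.le_mkMetric (fun e => tubeConst d r L * e ^ ((d : ℝ) - 1)) μ
      (ENNReal.ofReal (r / 2)) (by simpa using half_pos hr) fun s hs => ?_).trans
      (Measure.mkMetric_mono_smul tubeConst_ne_top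
        (tubeConst_ne_zero hr (diam_nonneg.trans hdiam)) (.of_forall fun _ => le_rfl))
    have hs' : ediam (closure s) < ENNReal.ofReal r := by
      rw [ediam_closure]
      exact hs.trans_lt (ENNReal.ofReal_lt_ofReal_iff hr |>.2 (half_lt_self hr))
    -- `s` need not be measurable, but its closure is and has the same diameter.
    calc μ s ≤ μ (closure s) := measure_mono subset_closure
      _ = volume.restrict Ω (P ⁻¹' closure s) :=
          Measure.map_apply hP isClosed_closure.measurableSet
      _ ≤ tubeConst d r L * ediam (closure s) ^ ((d : ℝ) - 1) :=
          (hpreimage _).trans (volume_projectionTube_le_ediam hr hΩ hext hdiam hs')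
      _ = tubeConst d r L * ediam s ^ ((d : ℝ) - 1) := by rw [ediam_closure]
  have hconc : μ.restrict (frontier Ω) = μ := Measure.restrict_eq_self_of_ae_mem <|
    (ae_map_iff hP.aemeasurable measurableSet_frontier).2 (hPproj.mono fun _ h => h.1)
  rw [← hconc, ← Measure.restrict_smul]
  exact Measure.restrict_mono le_rfl hμ

end Hausdorff

/-- If `Ω` satisfies a uniform exterior ball condition of radius `r > 0` and
`f⁺ ∈ L^∞(Ω)` is a nonnegative density, then `(P_∂Ω)#(f⁺ dx)` has bounded density w.r.t.
`H^{d-1}⌊∂Ω`, with bound depending only on `d`, `r`, `diam Ω` and `‖f⁺‖_∞`. -/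
theorem projection_pushforward_bounded_density (d : ℕ) (r L : ℝ) (hr : 0 < r) (hL : 0 < L) :
    ∃ C : ℝ, 0 < C ∧
      ∀ (Ω : Set (EuclideanSpace ℝ (Fin d))), IsCompact Ω → ExteriorBallCondition Ω r →
        Metric.diam Ω ≤ L →
        ∀ (fp : EuclideanSpace ℝ (Fin d) → ℝ) (M : ℝ), Measurable fp → (∀ x, 0 ≤ fp x) →
          (∀ x, fp x ≤ M) →
          ∀ (P : EuclideanSpace ℝ (Fin d) → EuclideanSpace ℝ (Fin d)), Measurable P →
            (∀ᵐ x ∂(volume.restrict Ω), P x ∈ frontier Ω ∧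
              dist x (P x) = Metric.infDist x (frontier Ω)) →
            Measure.map P ((volume.restrict Ω).withDensity fun x => ENNReal.ofReal (fp x)) ≤
              (ENNReal.ofReal (C * M)) • (μH[(d : ℝ) - 1]).restrict (frontier Ω) := by
  refine ⟨(tubeConst d r L).toReal,
    ENNReal.toReal_pos (tubeConst_ne_zero hr hL.le) tubeConst_ne_top, ?_⟩
  intro Ω hΩ hext hdiam fp M _ _ hfpM P hP hPproj
  have hdensity : (volume.restrict Ω).withDensity (fun x => ENNReal.ofReal (fp x)) ≤
      ENNReal.ofReal M • volume.restrict Ω := by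
    rw [← withDensity_const]
    exact withDensity_mono (.of_forall fun x => ENNReal.ofReal_le_ofReal (hfpM x))
  calc _ ≤ ENNReal.ofReal M • (volume.restrict Ω).map P := by
        rw [← Measure.map_smul]; exact Measure.map_mono hdensity hP
    _ ≤ ENNReal.ofReal M • tubeConst d r L • (μH[(d : ℝ) - 1]).restrict (frontier Ω) := by
        gcongr; exact map_le_smul_hausdorffMeasure hr hΩ hext hdiam hP hPproj
    _ = _ := by
        rw [smul_smul, ENNReal.ofReal_mul ENNReal.toReal_nonneg,
          ENNReal.ofReal_toReal tubeConst_ne_top, mul_comm]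
end
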